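/- Let f : (ℝᵈ)* → ℝᵖ be computed by a minimal linear 2-RNN (h₀*, 𝒜*, Ω*) with n hidden units. For each l, let H^{(l)} be its Hankel tensor and define P* ∈ ℝ^{d^L × n} and S* ∈ ℝ^{n × d^L p} by (P*)_{(i₁,…,i_L), j} = ((𝒜* ×₁ h₀*)_{i₁,:} 𝒜*_{:,i₂,:}⋯𝒜*_{:,i_L,:})_j and (S*)_{j, (i₁,…,i_L, m)} = (𝒜*_{:,i₁,:}⋯𝒜*_{:,i_L,:} Ω*ᵀ)_{j,m}. Then the reshaping of H^{(2L)} into a d^L × d^L p matrix factorizes as P* S*; the reshaping of H^{(2L+1)} into a d^L × d × d^L p third-order tensor equals 𝒜* ×₁ P* ×₃ (S*)ᵀ; the reshaping of H^{(L)} into a d^L × p matrix equals P* (Ω*)ᵀ; and the vectorization of H^{(L)} in ℝ^{d^L p} equals (S*)ᵀ h₀*. -/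

import Mathlib

open Matrix BigOperators

noncomputable section

def rnnStep {n d : ℕ} (A : Fin n → Fin d → Fin n → ℝ) (h : Fin n → ℝ) (x : Fin d → ℝ) :
    Fin n → ℝ := fun j => ∑ i, ∑ σ, A i σ j * h i * x σ

def hState {n d : ℕ} (A : Fin n → Fin d → Fin n → ℝ) (h₀ : Fin n → ℝ)
    (xs : List (Fin d → ℝ)) : Fin n → ℝ := xs.foldl (rnnStep A) h₀

def rnnOut {n d p : ℕ} (h₀ : Fin n → ℝ) (A : Fin n → Fin d → Fin n → ℝ)
    (Ω : Fin p → Fin n → ℝ) (xs : List (Fin d → ℝ)) : Fin p → ℝ :=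
  fun m => ∑ j, Ω m j * hState A h₀ xs j
def oneHot {d : ℕ} (σ : Fin d) : Fin d → ℝ := Pi.single σ 1

def tslice {n d : ℕ} (A : Fin n → Fin d → Fin n → ℝ) (σ : Fin d) :
    Matrix (Fin n) (Fin n) ℝ := fun i j => A i σ j

/-- Product of slice matrices `𝒜_{:,i₁,:} ⋯ 𝒜_{:,i_L,:}`. -/
def prodSlices {n d L : ℕ} (A : Fin n → Fin d → Fin n → ℝ) (u : Fin L → Fin d) :
    Matrix (Fin n) (Fin n) ℝ :=
  (List.ofFn fun t : Fin L => tslice A (u t)).prod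

/-- A linear 2-RNN with `n` hidden units computing `f` is minimal if any linear 2-RNN
computing `f` has at least `n` hidden units. -/
def IsMinimal {d p : ℕ} (n : ℕ) (f : List (Fin d → ℝ) → Fin p → ℝ) : Prop :=
  ∀ (n' : ℕ) (h₀' : Fin n' → ℝ) (A' : Fin n' → Fin d → Fin n' → ℝ) (Ω' : Fin p → Fin n' → ℝ),
    (∀ xs, rnnOut h₀' A' Ω' xs = f xs) → n ≤ n'

/-!
Reading the one-hot letter `e_σ` multiplies the hidden state on the right by the slice
`𝒜_{:,σ,:}`, so on a word of one-hot letters the network outputs `h₀ᵀ 𝒜_{i₁} ⋯ 𝒜_{i_k} Ωᵀ`.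
Each factorization is this matrix product split after the first `L` letters: the left part
gives the rows of `P*`, the right part the columns of `S*`.
-/

section

variable {n d : ℕ} (A : Fin n → Fin d → Fin n → ℝ)

lemma hState_append (h : Fin n → ℝ) (xs ys : List (Fin d → ℝ)) :
    hState A h (xs ++ ys) = hState A (hState A h xs) ys :=
  List.foldl_append

lemma hState_singleton_oneHot (h : Fin n → ℝ) (σ : Fin d) :
    hState A h [oneHot σ] = h ᵥ* tslice A σ := by
  show rnnStep A h (oneHot σ) = _
  funext j
  simp only [rnnStep, oneHot, vecMul, dotProduct, tslice]
  refine Finset.sum_congr rfl fun i _ => ?_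
  rw [Finset.sum_eq_single σ (fun τ _ hτ => by simp [hτ]) (by simp)]
  simp [mul_comm]

lemma hState_map_oneHot (h : Fin n → ℝ) (w : List (Fin d)) :
    hState A h (w.map oneHot) = h ᵥ* (w.map (tslice A)).prod := by
  induction w generalizing h with
  | nil => simp [hState]
  | cons σ w ih =>
    rw [List.map_cons, ← List.singleton_append, hState_append,
      hState_singleton_oneHot, ih, List.map_cons, List.prod_cons, vecMul_vecMul]

lemma hState_ofFn_oneHot {L : ℕ} (h : Fin n → ℝ) (u : Fin L → Fin d) :
    hState A h (List.ofFn fun t => oneHot (u t)) = h ᵥ* prodSlices A u := by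
  have key := hState_map_oneHot A h (List.ofFn u)
  rwa [List.map_ofFn, List.map_ofFn] at key

lemma rnnOut_apply {p : ℕ} (h₀ : Fin n → ℝ) (Ω : Fin p → Fin n → ℝ)
    (xs : List (Fin d → ℝ)) (m : Fin p) :
    rnnOut h₀ A Ω xs m = hState A h₀ xs ⬝ᵥ Ω m :=
  dotProduct_comm _ _

end

theorem hankel_factorizations_general {n d p L : ℕ}
    (h₀ : Fin n → ℝ) (A : Fin n → Fin d → Fin n → ℝ) (Ω : Fin p → Fin n → ℝ)
    (f : List (Fin d → ℝ) → Fin p → ℝ) (hf : ∀ xs, f xs = rnnOut h₀ A Ω xs)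
    (Pstar : Matrix (Fin L → Fin d) (Fin n) ℝ)
    (hP : ∀ u j, Pstar u j = Matrix.vecMul h₀ (prodSlices A u) j)
    (Sstar : Matrix (Fin n) ((Fin L → Fin d) × Fin p) ℝ)
    (hS : ∀ j v m, Sstar j (v, m) = ∑ b, prodSlices A v j b * Ω m b) :
    (∀ (u v : Fin L → Fin d) (m : Fin p),
      f ((List.ofFn fun t => oneHot (u t)) ++ (List.ofFn fun t => oneHot (v t))) m
        = ∑ j, Pstar u j * Sstar j (v, m))
    ∧ (∀ (u : Fin L → Fin d) (σ : Fin d) (v : Fin L → Fin d) (m : Fin p),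
      f ((List.ofFn fun t => oneHot (u t)) ++ [oneHot σ] ++ (List.ofFn fun t => oneHot (v t))) m
        = ∑ a, ∑ b, Pstar u a * A a σ b * Sstar b (v, m))
    ∧ (∀ (u : Fin L → Fin d) (m : Fin p),
      f (List.ofFn fun t => oneHot (u t)) m = ∑ a, Pstar u a * Ω m a)
    ∧ (∀ (u : Fin L → Fin d) (m : Fin p),
      f (List.ofFn fun t => oneHot (u t)) m = ∑ a, Sstar a (u, m) * h₀ a) := by
  have hP_row : ∀ u, Pstar u = h₀ ᵥ* prodSlices A u := fun u => funext (hP u)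
  have hS_col : ∀ v m, (fun j => Sstar j (v, m)) = prodSlices A v *ᵥ Ω m :=
    fun v m => funext fun j => hS j v m
  refine ⟨fun u v m => ?_, fun u σ v m => ?_, fun u m => ?_, fun u m => ?_⟩
  · rw [hf, rnnOut_apply, hState_append, hState_ofFn_oneHot, hState_ofFn_oneHot,
      ← dotProduct_mulVec, ← hP_row, ← hS_col]
    rfl
  · rw [hf, rnnOut_apply, hState_append, hState_append, hState_ofFn_oneHot,
      hState_singleton_oneHot, hState_ofFn_oneHot, ← dotProduct_mulVec, ← hP_row, ← hS_col]
    simp only [dotProduct, vecMul, tslice, Finset.sum_mul]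
    exact Finset.sum_comm
  · rw [hf, rnnOut_apply, hState_ofFn_oneHot, ← hP_row]
    rfl
  · rw [hf, rnnOut_apply, hState_ofFn_oneHot, ← dotProduct_mulVec, ← hS_col, dotProduct_comm]
    rfl

/-- Factorizations of the Hankel tensors of a minimal linear 2-RNN:
`⟨⟨H^{(2L)}⟩⟩_{L,L+1} = P* S*`, `⟨⟨H^{(2L+1)}⟩⟩_{L,1,L+1} = 𝒜* ×₁ P* ×₃ (S*)ᵀ`,
`⟨⟨H^{(L)}⟩⟩_{L,1} = P* (Ω*)ᵀ` and `vec(H^{(L)}) = (S*)ᵀ h₀*`. -/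
theorem hankel_factorizations {n d p L : ℕ}
    (h₀ : Fin n → ℝ) (A : Fin n → Fin d → Fin n → ℝ) (Ω : Fin p → Fin n → ℝ)
    (f : List (Fin d → ℝ) → Fin p → ℝ) (hf : ∀ xs, f xs = rnnOut h₀ A Ω xs)
    (hmin : IsMinimal n f)
    (Pstar : Matrix (Fin L → Fin d) (Fin n) ℝ)
    (hP : ∀ u j, Pstar u j = Matrix.vecMul h₀ (prodSlices A u) j)
    (Sstar : Matrix (Fin n) ((Fin L → Fin d) × Fin p) ℝ)
    (hS : ∀ j v m, Sstar j (v, m) = ∑ b, prodSlices A v j b * Ω m b) :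
    (∀ (u v : Fin L → Fin d) (m : Fin p),
      f ((List.ofFn fun t => oneHot (u t)) ++ (List.ofFn fun t => oneHot (v t))) m
        = ∑ j, Pstar u j * Sstar j (v, m))
    ∧ (∀ (u : Fin L → Fin d) (σ : Fin d) (v : Fin L → Fin d) (m : Fin p),
      f ((List.ofFn fun t => oneHot (u t)) ++ [oneHot σ] ++ (List.ofFn fun t => oneHot (v t))) m
        = ∑ a, ∑ b, Pstar u a * A a σ b * Sstar b (v, m))
    ∧ (∀ (u : Fin L → Fin d) (m : Fin p),
      f (List.ofFn fun t => oneHot (u t)) m = ∑ a, Pstar u a * Ω m a)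
    ∧ (∀ (u : Fin L → Fin d) (m : Fin p),
      f (List.ofFn fun t => oneHot (u t)) m = ∑ a, Sstar a (u, m) * h₀ a) :=
  hankel_factorizations_general h₀ A Ω f hf Pstar hP Sstar hS
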